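/- (Monotonic policy improvement.) For any two policies π and π′, if E_{s ~ ν^{π′,μ}} E_{a ~ π′(s)} [A^π(s,a)] ≥ 0, then J(π′) ≥ J(π). -/

import Mathlib

open scoped BigOperators

section MDPDefs

variable {S A : Type*} [Fintype S] [Fintype A]

/-- Expectation of a real-valued function under a PMF on a finite type (a finite sum). -/
noncomputable def pmfExp {X : Type*} [Fintype X] (p : PMF X) (f : X → ℝ) : ℝ :=
  ∑ x, (p x).toReal * f x

/-- Time-`t` state distribution `d_t^{π,μ}`:
`d_0 = μ` and `d_{t+1}` is obtained by sampling `x ~ d_t`, `a ~ π x`, `s' ~ P x a`. -/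
noncomputable def stateDist (P : S → A → PMF S) (π : S → PMF A) (μ : PMF S) : ℕ → PMF S
  | 0 => μ
  | t + 1 => (stateDist P π μ t).bind fun x => (π x).bind fun a => P x a

/-- State value function `V^π(s) = Σ_t γ^t E_{x ~ d_t^{π, δ_s}} E_{a ~ π x}[r x a]`. -/
noncomputable def Vval (P : S → A → PMF S) (r : S → A → ℝ) (γ : ℝ) (π : S → PMF A) (s : S) : ℝ :=
  ∑' t : ℕ, γ ^ t * pmfExp (stateDist P π (PMF.pure s) t) fun x => pmfExp (π x) fun a => r x a

/-- Return from an initial distribution: `J(π) = E_{s~μ}[V^π(s)]`. -/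
noncomputable def Jret (P : S → A → PMF S) (r : S → A → ℝ) (γ : ℝ) (π : S → PMF A) (μ : PMF S) : ℝ :=
  pmfExp μ (Vval P r γ π)

/-- State-action value `Q^π(s,a) = r(s,a) + γ E_{s' ~ P s a}[V^π(s')]`. -/
noncomputable def Qval (P : S → A → PMF S) (r : S → A → ℝ) (γ : ℝ) (π : S → PMF A)
    (s : S) (a : A) : ℝ :=
  r s a + γ * pmfExp (P s a) (Vval P r γ π)

/-- Advantage `A^π(s,a) = Q^π(s,a) - V^π(s)`. -/
noncomputable def Adv (P : S → A → PMF S) (r : S → A → ℝ) (γ : ℝ) (π : S → PMF A)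
    (s : S) (a : A) : ℝ :=
  Qval P r γ π s a - Vval P r γ π s

/-- Discounted state-visitation distribution `ν^{π,μ}(s) = (1-γ) Σ_t γ^t d_t^{π,μ}(s)`. -/
noncomputable def visit (P : S → A → PMF S) (π : S → PMF A) (μ : PMF S) (γ : ℝ) (s : S) : ℝ :=
  (1 - γ) * ∑' t : ℕ, γ ^ t * (stateDist P π μ t s).toReal

/-- `ℓ¹` distance between two PMFs on a finite type. -/
noncomputable def l1Dist {X : Type*} [Fintype X] (p q : PMF X) : ℝ :=
  ∑ x, |(p x).toReal - (q x).toReal|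

/-- KL divergence `D_KL(p‖q) = Σ_{x : p x > 0} p x * log (p x / q x)` on a finite type. -/
noncomputable def pmfKL {X : Type*} [Fintype X] (p q : PMF X) : ℝ :=
  ∑ x, if p x = 0 then 0 else (p x).toReal * Real.log ((p x).toReal / (q x).toReal)

/-- Mixed behavior policy: teacher's action when the intervention indicator is on,
student's action otherwise. -/
noncomputable def mixPolicy {S A : Type*} (πt πs : S → PMF A) (T : S → Bool) (s : S) : PMF A :=
  if T s then πt s else πs s

/-- Finite-horizon value of a deterministic policy, defined recursively:
`V_0(s) = r s (σ s)` and `V_{k+1}(s) = r s (σ s) + γ E_{s' ~ P s (σ s)}[V_k s']`. -/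
noncomputable def Vfin (P : S → A → PMF S) (r : S → A → ℝ) (γ : ℝ) (σ : S → A) : ℕ → S → ℝ
  | 0, s => r s (σ s)
  | k + 1, s => r s (σ s) + γ * pmfExp (P s (σ s)) (Vfin P r γ σ k)

/-- Finite-horizon value of the switching (mixed) policy that at each step picks whichever of
the two deterministic policies gives the larger continuation value. -/
noncomputable def Wswitch (P : S → A → PMF S) (r : S → A → ℝ) (γ : ℝ)
    (πt πs : S → A) : ℕ → S → ℝ
  | 0, s => max (r s (πt s)) (r s (πs s))
  | k + 1, s =>
      max (r s (πt s) + γ * pmfExp (P s (πt s)) (Wswitch P r γ πt πs k))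
          (r s (πs s) + γ * pmfExp (P s (πs s)) (Wswitch P r γ πt πs k))

end MDPDefs

/-!
The expected advantage of `π` along the trajectory of `π'` telescopes: since
`E_{d_t}[E_{π'} A^π] = E_{d_t}[E_{π'} r] + γ E_{d_{t+1}}[V^π] - E_{d_t}[V^π]`, the discounted
sum over `t` is `J(π') - J(π)` (performance difference lemma). Weighting by the visitation
distribution `ν^{π',μ}` is the same sum scaled by `1 - γ > 0`.
-/

lemma PMF.toReal_apply_le_one {X : Type*} (p : PMF X) (x : X) : (p x).toReal ≤ 1 :=
  ENNReal.toReal_le_of_le_ofReal zero_le_one (by simpa using p.coe_le_one x)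

lemma summable_geometric_mul_toReal {X : Type*} {γ : ℝ} (hγ0 : 0 ≤ γ) (hγ1 : γ < 1)
    (d : ℕ → PMF X) (x : X) : Summable fun t => γ ^ t * (d t x).toReal :=
  (summable_geometric_of_lt_one hγ0 hγ1).of_nonneg_of_le
    (fun t => mul_nonneg (pow_nonneg hγ0 t) ENNReal.toReal_nonneg)
    (fun t => mul_le_of_le_one_right (pow_nonneg hγ0 t) ((d t).toReal_apply_le_one x))

section Expectation

variable {X : Type*} [Fintype X]

lemma PMF.sum_toReal_eq_one (p : PMF X) : ∑ x, (p x).toReal = 1 := by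
  rw [← ENNReal.toReal_sum fun x _ => p.apply_ne_top x, ← tsum_fintype (L := .unconditional _),
    p.tsum_coe, ENNReal.toReal_one]

lemma pmfExp_const (p : PMF X) (c : ℝ) : pmfExp p (fun _ => c) = c := by
  rw [pmfExp, ← Finset.sum_mul, p.sum_toReal_eq_one, one_mul]

lemma pmfExp_add (p : PMF X) (f g : X → ℝ) :
    pmfExp p (fun x => f x + g x) = pmfExp p f + pmfExp p g := by
  simp only [pmfExp, mul_add, Finset.sum_add_distrib]

lemma pmfExp_sub (p : PMF X) (f g : X → ℝ) :
    pmfExp p (fun x => f x - g x) = pmfExp p f - pmfExp p g := by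
  simp only [pmfExp, mul_sub, Finset.sum_sub_distrib]

lemma pmfExp_const_mul (p : PMF X) (c : ℝ) (f : X → ℝ) :
    pmfExp p (fun x => c * f x) = c * pmfExp p f := by
  simp only [pmfExp, Finset.mul_sum, mul_left_comm]

lemma pmfExp_bind {Y : Type*} [Fintype Y] (p : PMF X) (q : X → PMF Y) (f : Y → ℝ) :
    pmfExp (p.bind q) f = pmfExp p fun x => pmfExp (q x) f := by
  have bind_toReal (y : Y) : ((p.bind q) y).toReal = ∑ x, (p x).toReal * (q x y).toReal := by
    rw [PMF.bind_apply, tsum_fintype, ENNReal.toReal_sum fun x _ =>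
      ENNReal.mul_ne_top (p.apply_ne_top x) ((q x).apply_ne_top y)]
    simp only [ENNReal.toReal_mul]
  simp only [pmfExp, bind_toReal, Finset.sum_mul, Finset.mul_sum, mul_assoc]
  exact Finset.sum_comm

lemma pmfExp_tsum (p : PMF X) {g : X → ℕ → ℝ} (hg : ∀ x, Summable (g x)) :
    pmfExp p (fun x => ∑' t, g x t) = ∑' t, pmfExp p fun x => g x t := by
  simp only [pmfExp, ← tsum_mul_left]
  exact (Summable.tsum_finsetSum fun x _ => (hg x).mul_left _).symm

variable {γ : ℝ}

lemma summable_geometric_mul_pmfExp (hγ0 : 0 ≤ γ) (hγ1 : γ < 1) (d : ℕ → PMF X) (f : X → ℝ) :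
    Summable fun t => γ ^ t * pmfExp (d t) f := by
  simp only [pmfExp, Finset.mul_sum, ← mul_assoc]
  exact summable_sum fun x _ => (summable_geometric_mul_toReal hγ0 hγ1 d x).mul_right (f x)

lemma tsum_geometric_mul_pmfExp (hγ0 : 0 ≤ γ) (hγ1 : γ < 1) (d : ℕ → PMF X) (f : X → ℝ) :
    ∑' t, γ ^ t * pmfExp (d t) f = ∑ x, (∑' t, γ ^ t * (d t x).toReal) * f x := by
  simp only [pmfExp, Finset.mul_sum, ← mul_assoc, ← tsum_mul_right]
  exact Summable.tsum_finsetSum fun x _ =>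
    (summable_geometric_mul_toReal hγ0 hγ1 d x).mul_right (f x)

end Expectation

section MDP

lemma stateDist_eq_bind {S A : Type*} (P : S → A → PMF S)
    (π : S → PMF A) (μ : PMF S) (t : ℕ) :
    stateDist P π μ t = μ.bind fun s => stateDist P π (PMF.pure s) t := by
  induction t with
  | zero => exact (PMF.bind_pure μ).symm
  | succ t ih => rw [stateDist, ih, PMF.bind_bind]; rfl

variable {S A : Type*} [Fintype S] [Fintype A] (P : S → A → PMF S) (r : S → A → ℝ)

lemma pmfExp_stateDist_succ (π : S → PMF A) (μ : PMF S) (t : ℕ) (f : S → ℝ) :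
    pmfExp (stateDist P π μ (t + 1)) f
      = pmfExp (stateDist P π μ t) fun x => pmfExp (π x) fun a => pmfExp (P x a) f := by
  simp only [stateDist, pmfExp_bind]

lemma pmfExp_adv (γ : ℝ) (π π' : S → PMF A) (s : S) :
    pmfExp (π' s) (fun a => Adv P r γ π s a)
      = pmfExp (π' s) (r s) + γ * pmfExp (π' s) (fun a => pmfExp (P s a) (Vval P r γ π))
        - Vval P r γ π s := by
  simp only [Adv, Qval, pmfExp_sub, pmfExp_add, pmfExp_const_mul, pmfExp_const]

variable {γ : ℝ}

lemma Jret_eq_tsum (hγ0 : 0 ≤ γ) (hγ1 : γ < 1) (π : S → PMF A) (μ : PMF S) :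
    Jret P r γ π μ = ∑' t, γ ^ t * pmfExp (stateDist P π μ t) fun x => pmfExp (π x) (r x) := by
  rw [Jret]
  unfold Vval
  rw [pmfExp_tsum μ fun s => summable_geometric_mul_pmfExp hγ0 hγ1 _ _]
  congr 1 with t
  rw [pmfExp_const_mul, stateDist_eq_bind P π μ t, pmfExp_bind]

theorem performance_difference (hγ0 : 0 ≤ γ) (hγ1 : γ < 1) (π π' : S → PMF A) (μ : PMF S) :
    Jret P r γ π' μ - Jret P r γ π μ
      = ∑' t, γ ^ t *
          pmfExp (stateDist P π' μ t) fun s => pmfExp (π' s) fun a => Adv P r γ π s a := by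
  set a : ℕ → ℝ := fun t => γ ^ t * pmfExp (stateDist P π' μ t) (Vval P r γ π)
  have ha : Summable a := summable_geometric_mul_pmfExp hγ0 hγ1 _ _
  have step (t : ℕ) :
      γ ^ t * pmfExp (stateDist P π' μ t) (fun s => pmfExp (π' s) fun a => Adv P r γ π s a)
        = γ ^ t * pmfExp (stateDist P π' μ t) (fun x => pmfExp (π' x) (r x))
          + (a (t + 1) - a t) := by
    simp only [a, pmfExp_adv, pmfExp_sub, pmfExp_add, pmfExp_const_mul, pmfExp_stateDist_succ,
      pow_succ]
    ring
  have telescope : ∑' t, (a (t + 1) - a t) = -Jret P r γ π μ := by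
    rw [((summable_nat_add_iff 1).mpr ha).tsum_sub ha, ha.tsum_eq_zero_add]
    simp only [a, pow_zero, one_mul, stateDist, Jret]
    ring
  rw [tsum_congr step, (summable_geometric_mul_pmfExp hγ0 hγ1 _ _).tsum_add
    (((summable_nat_add_iff 1).mpr ha).sub ha), telescope, ← Jret_eq_tsum P r hγ0 hγ1]
  ring

omit [Fintype A] in
lemma sum_visit_mul (hγ0 : 0 ≤ γ) (hγ1 : γ < 1) (π : S → PMF A) (μ : PMF S) (f : S → ℝ) :
    ∑ s, visit P π μ γ s * f s = (1 - γ) * ∑' t, γ ^ t * pmfExp (stateDist P π μ t) f := by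
  rw [tsum_geometric_mul_pmfExp hγ0 hγ1, Finset.mul_sum]
  simp only [visit, mul_assoc]

end MDP

theorem monotonic_improvement_general {S A : Type*} [Fintype S] [Fintype A]
    (P : S → A → PMF S) (r : S → A → ℝ) (γ : ℝ) (hγ0 : 0 ≤ γ) (hγ1 : γ < 1)
    (π π' : S → PMF A) (μ : PMF S)
    (h : 0 ≤ ∑ s, visit P π' μ γ s * pmfExp (π' s) (fun a => Adv P r γ π s a)) :
    Jret P r γ π μ ≤ Jret P r γ π' μ := by
  rw [sum_visit_mul P hγ0 hγ1, ← performance_difference P r hγ0 hγ1] at h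
  exact sub_nonneg.mp (nonneg_of_mul_nonneg_right h (sub_pos.mpr hγ1))

/-- Monotonic policy improvement: if the visitation-weighted expected advantage of `π` under
`π'` is nonnegative, then `J(π') ≥ J(π)`. -/
theorem monotonic_improvement {S A : Type*} [Fintype S] [Nonempty S] [Fintype A] [Nonempty A]
    (P : S → A → PMF S) (r : S → A → ℝ) (γ : ℝ) (hγ0 : 0 ≤ γ) (hγ1 : γ < 1)
    (π π' : S → PMF A) (μ : PMF S)
    (h : 0 ≤ ∑ s, visit P π' μ γ s * pmfExp (π' s) (fun a => Adv P r γ π s a)) :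
    Jret P r γ π μ ≤ Jret P r γ π' μ :=
  monotonic_improvement_general P r γ hγ0 hγ1 π π' μ h
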